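/- arXiv:1210.0123 — 5 statements merged into one kernel-verified Lean document; each statement's English description precedes it below -/
import Mathlib

section
/- Let Δ be a root system with a chosen simple system Ψ and let ν ∈ Ψ be a fixed simple root. For α ∈ Δ, let n_ν(α) denote the coefficient of ν when α is written in the basis Ψ. If α, β ∈ Δ satisfy n_ν(α) = -1 and n_ν(β) = 2, then ⟨α, β⟩ ≤ 0 (the inner product of α and β with respect to the Weyl-invariant form is nonpositive). -/
open scoped RealInnerProductSpace

/-- If `α, β` are roots with ν-coefficients `-1` and `2` respectively, then `⟪α, β⟫ ≤ 0`.
The root system is encoded by: a set of roots `Δ`, the ν-coefficient function `n`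
(compatible with subtraction), the fact that all ν-coefficients of roots lie in `[-2, 2]`,
and the standard fact that if `⟪α, β⟫ > 0` and `β ≠ α` then `β - α` is a root. -/
theorem stmt0 {V : Type*} [NormedAddCommGroup V] [InnerProductSpace ℝ V]
    (Δ : Set V) (n : V → ℤ)
    (hn : ∀ x y : V, n (x - y) = n x - n y)
    (hbound : ∀ α ∈ Δ, -2 ≤ n α ∧ n α ≤ 2)
    (hsub : ∀ α ∈ Δ, ∀ β ∈ Δ, β ≠ α → 0 < ⟪α, β⟫ → β - α ∈ Δ)
    (α β : V) (hα : α ∈ Δ) (hβ : β ∈ Δ)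
    (hnα : n α = -1) (hnβ : n β = 2) :
    ⟪α, β⟫ ≤ 0 := by
  by_contra h
  push_neg at h
  have hne : β ≠ α := by
    intro e
    rw [e, hnα] at hnβ
    omega
  have hmem := hsub α hα β hβ hne h
  have := (hbound _ hmem).2
  rw [hn, hnα, hnβ] at this
  omega
end

section
/- In the root system of type D_p (p ≥ 4) realized in R^p with roots ±ε_i±ε_j (i<j), and with Δ_{-2} = {-(ε_i+ε_j) : 1 ≤ i < j ≤ p}, the inductively defined maximal strongly orthogonal set is Γ = {γ_j = -(ε_{p-2j+1} + ε_{p-2j+2}) : 1 ≤ j ≤ ⌊p/2⌋}, and if p is even then Σ_j γ_j = -2ε*, where ε* = (1/2)(ε_1 + ⋯ + ε_p) is the fundamental weight corresponding to the simple root ε = ε_{p-1} + ε_p. -/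
open scoped RealInnerProductSpace

private lemma suppD {p : ℕ} {v : EuclideanSpace ℝ (Fin p)} {i j m : Fin p}
    (hm : m ≠ i) (hm' : m ≠ j)
    (h : v = EuclideanSpace.single i (1:ℝ) + EuclideanSpace.single j 1 ∨
      v = -(EuclideanSpace.single i (1:ℝ) + EuclideanSpace.single j 1) ∨
      v = EuclideanSpace.single i (1:ℝ) - EuclideanSpace.single j 1 ∨
      v = EuclideanSpace.single j (1:ℝ) - EuclideanSpace.single i 1) :
    v m = 0 := by
  rcases h with rfl | rfl | rfl | rfl <;>
    simp [EuclideanSpace.single_apply, hm, hm']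

private lemma noThree {p : ℕ} {v : EuclideanSpace ℝ (Fin p)}
    (hv : ∃ i j : Fin p, i < j ∧
      (v = EuclideanSpace.single i (1:ℝ) + EuclideanSpace.single j 1 ∨
       v = -(EuclideanSpace.single i (1:ℝ) + EuclideanSpace.single j 1) ∨
       v = EuclideanSpace.single i (1:ℝ) - EuclideanSpace.single j 1 ∨
       v = EuclideanSpace.single j (1:ℝ) - EuclideanSpace.single i 1))
    {a b c : Fin p} (hab : a ≠ b) (hac : a ≠ c) (hbc : b ≠ c)
    (ha : v a ≠ 0) (hb : v b ≠ 0) (hc : v c ≠ 0) : False := by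
  obtain ⟨i, j, -, h⟩ := hv
  have h1 : a = i ∨ a = j := by
    by_contra h'; push_neg at h'; exact ha (suppD h'.1 h'.2 h)
  have h2 : b = i ∨ b = j := by
    by_contra h'; push_neg at h'; exact hb (suppD h'.1 h'.2 h)
  have h3 : c = i ∨ c = j := by
    by_contra h'; push_neg at h'; exact hc (suppD h'.1 h'.2 h)
  rcases h1 with rfl | rfl <;> rcases h2 with h2 | h2 <;> rcases h3 with h3 | h3 <;>
    simp_all

private lemma single_apply' {p : ℕ} (i m : Fin p) :
    (EuclideanSpace.single i (1:ℝ)) m = if m.val = i.val then 1 else 0 := by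
  rw [EuclideanSpace.single_apply]
  simp [Fin.ext_iff]

private lemma piLp_sum_apply {ι : Type*} (s : Finset ι) {p : ℕ}
    (f : ι → EuclideanSpace ℝ (Fin p)) (m : Fin p) :
    (∑ i ∈ s, f i) m = ∑ i ∈ s, f i m := by
  classical
  induction s using Finset.cons_induction with
  | empty => rfl
  | cons a s ha ih => rw [Finset.sum_cons, Finset.sum_cons, PiLp.add_apply, ih]

set_option maxHeartbeats 1000000 in
/-- Type `D_p` (`p ≥ 4`): `Γ = {γⱼ = -(ε_{p-2j+1} + ε_{p-2j+2}) : 1 ≤ j ≤ ⌊p/2⌋}` is a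
maximal set of pairwise strongly orthogonal roots in `Δ₋₂ = {-(εᵢ+εⱼ) : i < j}`, and if
`p` is even then `Σ γⱼ = -2ε*` where `ε* = (1/2)(ε₁ + ⋯ + ε_p)`. -/
theorem stmt3 (p : ℕ) (hp : 4 ≤ p) :
    let e : Fin p → EuclideanSpace ℝ (Fin p) := fun i => EuclideanSpace.single i 1
    let Δ : Set (EuclideanSpace ℝ (Fin p)) :=
      {v | ∃ i j : Fin p, i < j ∧
        (v = e i + e j ∨ v = -(e i + e j) ∨ v = e i - e j ∨ v = e j - e i)}
    let Δm2 : Set (EuclideanSpace ℝ (Fin p)) :=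
      {v | ∃ i j : Fin p, i < j ∧ v = -(e i + e j)}
    let γ : Fin (p / 2) → EuclideanSpace ℝ (Fin p) := fun j =>
      -(e ⟨p - 2 * j.val - 2, by have := j.isLt; omega⟩ +
        e ⟨p - 2 * j.val - 1, by have := j.isLt; omega⟩)
    let εstar : EuclideanSpace ℝ (Fin p) := (1 / 2 : ℝ) • ∑ i : Fin p, e i
    (∀ j, γ j ∈ Δm2) ∧
    (∀ i j, i ≠ j → γ i + γ j ∉ Δ ∧ γ i - γ j ∉ Δ) ∧
    (∀ β ∈ Δm2, β ∉ Set.range γ → ∃ j, β + γ j ∈ Δ ∨ β - γ j ∈ Δ) ∧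
    (Even p → ∑ j : Fin (p / 2), γ j = -((2 : ℝ) • εstar)) := by
  intro e Δ Δm2 γ εstar
  refine ⟨?_, ?_, ?_, ?_⟩
  · -- each γ j lies in Δ₋₂
    intro j
    have hj := j.isLt
    simp only [Δm2, γ, e, Set.mem_setOf_eq]
    exact ⟨⟨p - 2 * j.val - 2, by omega⟩, ⟨p - 2 * j.val - 1, by omega⟩,
      by simp only [Fin.lt_def]; omega, rfl⟩
  · -- strong orthogonality
    intro i j hij
    have hi := i.isLt
    have hj := j.isLt
    have hne : i.val ≠ j.val := fun h => hij (Fin.ext h)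
    have hab : (⟨p - 2 * i.val - 2, by omega⟩ : Fin p) ≠ ⟨p - 2 * i.val - 1, by omega⟩ :=
      Fin.ne_of_val_ne (show p - 2 * i.val - 2 ≠ p - 2 * i.val - 1 by omega)
    have hac : (⟨p - 2 * i.val - 2, by omega⟩ : Fin p) ≠ ⟨p - 2 * j.val - 2, by omega⟩ :=
      Fin.ne_of_val_ne (show p - 2 * i.val - 2 ≠ p - 2 * j.val - 2 by omega)
    have hbc : (⟨p - 2 * i.val - 1, by omega⟩ : Fin p) ≠ ⟨p - 2 * j.val - 2, by omega⟩ :=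
      Fin.ne_of_val_ne (show p - 2 * i.val - 1 ≠ p - 2 * j.val - 2 by omega)
    constructor
    · intro hmem
      obtain ⟨x, y, hxy, hforms⟩ := hmem
      refine noThree ⟨x, y, hxy, hforms⟩ hab hac hbc ?_ ?_ ?_ <;>
      · simp only [γ, e, PiLp.add_apply, PiLp.neg_apply, single_apply']
        split_ifs <;> first | omega | norm_num
    · intro hmem
      obtain ⟨x, y, hxy, hforms⟩ := hmem
      refine noThree ⟨x, y, hxy, hforms⟩ hab hac hbc ?_ ?_ ?_ <;>
      · simp only [γ, e, PiLp.sub_apply, PiLp.add_apply, PiLp.neg_apply, single_apply']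
        split_ifs <;> first | omega | norm_num
  · -- maximality
    intro β hβ hβr
    obtain ⟨i, j, hij, rfl⟩ := hβ
    have hj := j.isLt
    have hij' : i.val < j.val := hij
    obtain ⟨kv, hk, hcase⟩ :
        ∃ kv, kv < p / 2 ∧ (j.val = p - 2 * kv - 2 ∨ j.val = p - 2 * kv - 1) :=
      ⟨(p - 1 - j.val) / 2, by omega, by omega⟩
    refine ⟨⟨kv, hk⟩, Or.inr ?_⟩
    rcases hcase with h | h
    · -- j is the lower element of the pair ⇒ β - γ k = e b_k - e i
      refine ⟨i, ⟨p - 2 * kv - 1, by omega⟩, by simp only [Fin.lt_def]; omega,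
        Or.inr (Or.inr (Or.inr ?_))⟩
      ext m
      simp only [γ, e, PiLp.add_apply, PiLp.sub_apply, PiLp.neg_apply, single_apply']
      split_ifs <;> first | omega | norm_num
    · -- j is the upper element of the pair
      rcases eq_or_ne i.val (p - 2 * kv - 2) with hi | hi
      · -- then β = γ k, contradicting β ∉ range γ
        exfalso
        apply hβr
        refine ⟨⟨kv, hk⟩, ?_⟩
        ext m
        simp only [γ, e, PiLp.add_apply, PiLp.neg_apply, single_apply']
        split_ifs <;> first | omega | norm_num
      · rcases Nat.lt_or_ge i.val (p - 2 * kv - 2) with hlt | hge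
        · refine ⟨i, ⟨p - 2 * kv - 2, by omega⟩, by simp only [Fin.lt_def]; omega,
            Or.inr (Or.inr (Or.inr ?_))⟩
          ext m
          simp only [γ, e, PiLp.add_apply, PiLp.sub_apply, PiLp.neg_apply, single_apply']
          split_ifs <;> first | omega | norm_num
        · refine ⟨⟨p - 2 * kv - 2, by omega⟩, i, by simp only [Fin.lt_def]; omega,
            Or.inr (Or.inr (Or.inl ?_))⟩
          ext m
          simp only [γ, e, PiLp.add_apply, PiLp.sub_apply, PiLp.neg_apply, single_apply']
          split_ifs <;> first | omega | norm_num
  · -- sum formula when p is even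
    intro hpe
    obtain ⟨q, hq⟩ := hpe
    ext m
    have hm := m.isLt
    have hRHS : (-((2 : ℝ) • εstar)) m = -1 := by
      have hsum1 : (∑ i : Fin p, (e i : EuclideanSpace ℝ (Fin p))) m = 1 := by
        rw [piLp_sum_apply]
        simp only [e]
        simp [EuclideanSpace.single_apply, Finset.sum_ite_eq]
      simp only [εstar, PiLp.neg_apply, PiLp.smul_apply, hsum1, smul_eq_mul]
      norm_num
    rw [hRHS, piLp_sum_apply]
    have hklt : (p - 1 - m.val) / 2 < p / 2 := by omega
    rw [Finset.sum_eq_single_of_mem (⟨(p - 1 - m.val) / 2, hklt⟩ : Fin (p/2))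
      (Finset.mem_univ _)]
    · simp only [γ, e, PiLp.add_apply, PiLp.neg_apply, single_apply']
      split_ifs <;> first | omega | norm_num
    · intro b _ hb
      have hbv : b.val ≠ (p - 1 - m.val) / 2 := fun hv => hb (Fin.ext hv)
      have hblt := b.isLt
      simp only [γ, e, PiLp.add_apply, PiLp.neg_apply, single_apply']
      rw [if_neg (by omega), if_neg (by omega)]
      norm_num
end

section
/- Let Δ be a root system with base Ψ containing a distinguished simple root ν with n_ν(μ) = 2 for the highest root μ. Let Δ_k = Δ₀ ∪ Δ₂ ∪ Δ₋₂ (roots with even ν-coefficient). Then Δ_k is itself a root system (closed subsystem), and Δ₀⁺ ∪ Δ₂ is a positive system for Δ_k whose set of simple roots is (Ψ \ {ν}) ∪ {ε}, where ε is the minimal element of Δ₂ with respect to the partial order (β ≥ ε iff β - ε is a nonnegative combination of simple roots). -/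
/-- `Δ_k = Δ₀ ∪ Δ₂ ∪ Δ₋₂` (roots of even ν-coefficient) is a closed subsystem, and
`Δ₀⁺ ∪ Δ₂` is a positive system for it with simple roots `(Ψ \ {ν}) ∪ {ε}`, where `ε`
is the lowest root of `Δ₂`: every root in `Δ₀⁺ ∪ Δ₂` is a nonnegative integral combination
of `(Ψ \ {ν}) ∪ {ε}`, every root in `Δ₀⁻ ∪ Δ₋₂` is the negative of such a combination, and
`(Ψ \ {ν}) ∪ {ε}` is linearly independent. Here `c α ψ` is the coefficient of the simple
root `ψ` in the expansion of the root `α` in the base `Ψ`, and `n_ν(α) = c α ν`. -/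
theorem stmt7 {V : Type*} [AddCommGroup V] [Module ℝ V] [DecidableEq V]
    (Δ : Set V) (Ψ : Finset V) (ν : V) (hνΨ : ν ∈ Ψ)
    (c : V → V → ℤ)
    (hexp : ∀ α ∈ Δ, α = ∑ ψ ∈ Ψ, (c α ψ : ℝ) • ψ)
    (hsign : ∀ α ∈ Δ, (∀ ψ ∈ Ψ, 0 ≤ c α ψ) ∨ (∀ ψ ∈ Ψ, c α ψ ≤ 0))
    (hcadd : ∀ α ∈ Δ, ∀ β ∈ Δ, α + β ∈ Δ → ∀ ψ : V, c (α + β) ψ = c α ψ + c β ψ)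
    (hcneg : ∀ α ∈ Δ, -α ∈ Δ ∧ ∀ ψ : V, c (-α) ψ = -(c α ψ))
    (hbound : ∀ α ∈ Δ, -2 ≤ c α ν ∧ c α ν ≤ 2)
    (ε : V) (hε : ε ∈ Δ) (hεν : c ε ν = 2)
    (hεmin : ∀ β ∈ Δ, c β ν = 2 → ∀ ψ ∈ Ψ, c ε ψ ≤ c β ψ)
    (hΨind : LinearIndependent ℝ (fun ψ : Ψ => (ψ : V))) :
    (∀ α ∈ Δ, ∀ β ∈ Δ, (c α ν = 0 ∨ c α ν = 2 ∨ c α ν = -2) →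
      (c β ν = 0 ∨ c β ν = 2 ∨ c β ν = -2) → α + β ∈ Δ →
      (c (α + β) ν = 0 ∨ c (α + β) ν = 2 ∨ c (α + β) ν = -2)) ∧
    (∀ β ∈ Δ, ((∀ ψ ∈ Ψ, 0 ≤ c β ψ) ∧ c β ν = 0) ∨ c β ν = 2 →
      ∃ m : V → ℕ, β = ∑ ψ ∈ Ψ.erase ν ∪ {ε}, (m ψ : ℝ) • ψ) ∧
    (∀ β ∈ Δ, ((∀ ψ ∈ Ψ, c β ψ ≤ 0) ∧ c β ν = 0) ∨ c β ν = -2 →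
      ∃ m : V → ℕ, -β = ∑ ψ ∈ Ψ.erase ν ∪ {ε}, (m ψ : ℝ) • ψ) ∧
    LinearIndependent ℝ (fun ψ : (Ψ.erase ν ∪ {ε} : Finset V) => (ψ : V)) := by
  classical
  have hΨset : (↑Ψ : Set V) = insert ν (↑(Ψ.erase ν) : Set V) := by
    rw [Finset.coe_erase, Set.insert_diff_singleton, Set.insert_eq_self.mpr (by exact_mod_cast hνΨ)]
  have hν_not_mem : ν ∉ (↑(Ψ.erase ν) : Set V) := by simp
  have hΨind' : LinearIndependent ℝ (fun x : (↑Ψ : Set V) => (x : V)) := hΨind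
  have hErase_ind : LinearIndependent ℝ (fun x : (↑(Ψ.erase ν) : Set V) => (x : V)) :=
    LinearIndepOn.mono (v := id) hΨind' (by rw [hΨset]; exact Set.subset_insert _ _)
  have hν_span : ν ∉ Submodule.span ℝ (↑(Ψ.erase ν) : Set V) := by
    have := (linearIndepOn_id_insert hν_not_mem).mp (by rw [← hΨset]; exact hΨind')
    exact this.2
  have hεsub : (2 : ℝ) • ν = ε - ∑ ψ ∈ Ψ.erase ν, (c ε ψ : ℝ) • ψ := by
    have h := hexp ε hε
    rw [← Finset.add_sum_erase _ _ hνΨ, hεν] at h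
    have h2 := eq_sub_of_add_eq h.symm
    push_cast at h2
    exact h2
  have hε_span : ε ∉ Submodule.span ℝ (↑(Ψ.erase ν) : Set V) := by
    intro hmem
    apply hν_span
    have hS : (∑ ψ ∈ Ψ.erase ν, (c ε ψ : ℝ) • ψ) ∈ Submodule.span ℝ (↑(Ψ.erase ν) : Set V) :=
      Submodule.sum_smul_mem _ _ (fun ψ hψ => Submodule.subset_span (by exact_mod_cast hψ))
    have hν_eq : ν = (2⁻¹ : ℝ) • (ε - ∑ ψ ∈ Ψ.erase ν, (c ε ψ : ℝ) • ψ) := by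
      rw [← hεsub, smul_smul]
      norm_num
    have hmem2 : (2⁻¹ : ℝ) • (ε - ∑ ψ ∈ Ψ.erase ν, (c ε ψ : ℝ) • ψ) ∈
        Submodule.span ℝ (↑(Ψ.erase ν) : Set V) :=
      Submodule.smul_mem _ _ (Submodule.sub_mem _ hmem hS)
    rwa [← hν_eq] at hmem2
  have hεne : ε ∉ Ψ.erase ν := fun h => hε_span (Submodule.subset_span (by exact_mod_cast h))
  have hunion : Ψ.erase ν ∪ {ε} = insert ε (Ψ.erase ν) := by
    rw [Finset.union_comm, ← Finset.insert_eq]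
  have key : ∀ β ∈ Δ, ((∀ ψ ∈ Ψ, 0 ≤ c β ψ) ∧ c β ν = 0) ∨ c β ν = 2 →
      ∃ m : V → ℕ, β = ∑ ψ ∈ Ψ.erase ν ∪ {ε}, (m ψ : ℝ) • ψ := by
    intro β hβ hcase
    rcases hcase with ⟨hpos, hβν⟩ | hβν
    · refine ⟨fun ψ => if ψ = ε then 0 else (c β ψ).toNat, ?_⟩
      rw [hunion, Finset.sum_insert hεne]
      beta_reduce
      rw [if_pos rfl]
      have hsum : ∑ ψ ∈ Ψ.erase ν, ((if ψ = ε then 0 else (c β ψ).toNat : ℕ) : ℝ) • ψ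
          = ∑ ψ ∈ Ψ.erase ν, (c β ψ : ℝ) • ψ := by
        refine Finset.sum_congr rfl (fun ψ hψ => ?_)
        rw [if_neg (fun h => hεne (by rw [← h]; exact hψ))]
        congr 1
        rw [← Int.cast_natCast, Int.toNat_of_nonneg (hpos ψ (Finset.mem_of_mem_erase hψ))]
      rw [hsum]
      have h := hexp β hβ
      rw [← Finset.add_sum_erase _ _ hνΨ, hβν] at h
      simpa using h
    · refine ⟨fun ψ => if ψ = ε then 1 else (c β ψ - c ε ψ).toNat, ?_⟩
      rw [hunion, Finset.sum_insert hεne]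
      beta_reduce
      rw [if_pos rfl]
      have hsum : ∑ ψ ∈ Ψ.erase ν, ((if ψ = ε then 1 else (c β ψ - c ε ψ).toNat : ℕ) : ℝ) • ψ
          = ∑ ψ ∈ Ψ.erase ν, ((c β ψ - c ε ψ : ℤ) : ℝ) • ψ := by
        refine Finset.sum_congr rfl (fun ψ hψ => ?_)
        rw [if_neg (fun h => hεne (by rw [← h]; exact hψ))]
        congr 1
        rw [← Int.cast_natCast, Int.toNat_of_nonneg (by
          have := hεmin β hβ hβν ψ (Finset.mem_of_mem_erase hψ); omega)]
      rw [hsum]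
      have hβε : β - ε = ∑ ψ ∈ Ψ.erase ν, ((c β ψ - c ε ψ : ℤ) : ℝ) • ψ := by
        have h1 := hexp β hβ
        have h2 := hexp ε hε
        calc β - ε = (∑ ψ ∈ Ψ, (c β ψ : ℝ) • ψ) - ∑ ψ ∈ Ψ, (c ε ψ : ℝ) • ψ := by
              rw [← h1, ← h2]
          _ = ∑ ψ ∈ Ψ, ((c β ψ - c ε ψ : ℤ) : ℝ) • ψ := by
              rw [← Finset.sum_sub_distrib]
              refine Finset.sum_congr rfl (fun ψ _ => ?_)
              push_cast
              rw [sub_smul]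
          _ = ∑ ψ ∈ Ψ.erase ν, ((c β ψ - c ε ψ : ℤ) : ℝ) • ψ := by
              rw [← Finset.add_sum_erase _ _ hνΨ, hβν, hεν]
              simp
      rw [Nat.cast_one, one_smul]
      exact sub_eq_iff_eq_add'.mp hβε
  refine ⟨?_, key, ?_, ?_⟩
  · intro α hα β hβ hαν hβν hadd
    have h := hcadd α hα β hβ hadd ν
    have hb := hbound (α + β) hadd
    omega
  · intro β hβ hcase
    obtain ⟨hnegΔ, hnegc⟩ := hcneg β hβ
    apply key (-β) hnegΔ
    rcases hcase with ⟨hneg, hβν⟩ | hβν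
    · refine Or.inl ⟨fun ψ hψ => ?_, ?_⟩
      · have := hneg ψ hψ; rw [hnegc]; omega
      · rw [hnegc, hβν]; ring
    · refine Or.inr ?_
      rw [hnegc, hβν]; ring
  · rw [hunion]
    have hind : LinearIndependent ℝ (fun x : (insert ε (↑(Ψ.erase ν) : Set V) : Set V) => (x : V)) :=
      (linearIndepOn_id_insert (fun h => hε_span (Submodule.subset_span h))).mpr
        ⟨hErase_ind, hε_span⟩
    have hcoe : LinearIndependent ℝ (fun x : (↑(insert ε (Ψ.erase ν)) : Set V) => (x : V)) := by
      rw [Finset.coe_insert]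
      exact hind
    exact hcoe
end

section
/- Let Δ be the root system of a complex simple Lie algebra k with base Ψ_k, and let ε ∈ Ψ_k be such that in the Hermitian symmetric decomposition Δ = Δ₀ ∪ Δ₂ ∪ Δ₋₂ (coefficient of ε equal to 0, 1, -1 respectively — noting every root has ε-coefficient in {-1,0,1}), the longest Weyl group element w⁰ satisfies w⁰(ε) = -ε. Then w⁰(Δ₀⁺) = Δ₀⁻, w⁰(Δ₂) = Δ₋₂, and setting w_Y = w⁰·w_l⁰ (with w_l⁰ the longest element of the Weyl group of Δ₀), one has w_Y(Δ₀⁺) = Δ₀⁺, w_Y(Δ₂) = Δ₋₂, and w_Y² = identity. -/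
/-- Hermitian symmetric case: `c` is the ε-coefficient (a linear functional taking values
`-1, 0, 1` on roots), `P` is the positive system, `w⁰` the longest element (mapping `P` to
`Δ \ P`) with `w⁰(ε) = -ε` (equivalently `w⁰(Δ₀) = Δ₀`), and `w_l⁰` the longest element of
the Weyl group of `Δ₀`. Then `w⁰(Δ₀⁺) = Δ₀⁻`, `w⁰(Δ₂) = Δ₋₂`, and `w_Y = w⁰ ∘ w_l⁰`
satisfies `w_Y(Δ₀⁺) = Δ₀⁺`, `w_Y(Δ₂) = Δ₋₂` and `w_Y² = id`. -/
theorem stmt12 {V : Type*} [AddCommGroup V] [Module ℝ V]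
    (Δ P : Set V) (hPΔ : P ⊆ Δ)
    (hΔneg : ∀ α ∈ Δ, -α ∈ Δ)
    (hPpart : ∀ α ∈ Δ, (α ∈ P ↔ -α ∉ P))
    (c : V →ₗ[ℝ] ℝ)
    (hc : ∀ α ∈ Δ, c α = -1 ∨ c α = 0 ∨ c α = 1)
    (hP2 : ∀ α ∈ P, c α = 0 ∨ c α = 1)
    (hΔ2P : {α ∈ Δ | c α = 1} ⊆ P)
    (ε : V) (hεΔ : ε ∈ Δ) (hεP : ε ∈ P) (hεc : c ε = 1)
    (isW : (V ≃ₗ[ℝ] V) → Prop)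
    (w0 wl : V ≃ₗ[ℝ] V) (hw0W : isW w0) (hwlW : isW wl)
    (hWcomp : ∀ f g : V ≃ₗ[ℝ] V, isW f → isW g → isW (g.trans f))
    (hid : ∀ w : V ≃ₗ[ℝ] V, isW w → (⇑w '' P = P) → ∀ x, w x = x)
    (hw0Δ : ⇑w0 '' Δ = Δ) (hw0P : ⇑w0 '' P = Δ \ P)
    (hw0ε : w0 ε = -ε)
    (hw0Δ0 : ⇑w0 '' {α ∈ Δ | c α = 0} = {α ∈ Δ | c α = 0})
    (hwlΔ : ⇑wl '' Δ = Δ)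
    (hwlc : ∀ v : V, c (wl v) = c v)
    (hwl0 : ⇑wl '' {α ∈ Δ | c α = 0 ∧ α ∈ P} = {α ∈ Δ | c α = 0 ∧ α ∉ P}) :
    (⇑w0 '' {α ∈ Δ | c α = 0 ∧ α ∈ P} = {α ∈ Δ | c α = 0 ∧ α ∉ P}) ∧
    (⇑w0 '' {α ∈ Δ | c α = 1} = {α ∈ Δ | c α = -1}) ∧
    (⇑(wl.trans w0) '' {α ∈ Δ | c α = 0 ∧ α ∈ P} = {α ∈ Δ | c α = 0 ∧ α ∈ P}) ∧
    (⇑(wl.trans w0) '' {α ∈ Δ | c α = 1} = {α ∈ Δ | c α = -1}) ∧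
    (∀ x : V, (wl.trans w0) ((wl.trans w0) x) = x) := by
  have hinj : Function.Injective w0 := w0.injective
  have hΔmem : ∀ α ∈ Δ, w0 α ∈ Δ := by
    intro α hα; rw [← hw0Δ]; exact ⟨α, hα, rfl⟩
  have h0mem : ∀ α, α ∈ Δ → c α = 0 → w0 α ∈ Δ ∧ c (w0 α) = 0 := by
    intro α hα h0
    have : w0 α ∈ {α ∈ Δ | c α = 0} := by rw [← hw0Δ0]; exact ⟨α, ⟨hα, h0⟩, rfl⟩
    exact this
  have hA : ∀ α, α ∈ Δ → c α = 1 → c (w0 α) = -1 := by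
    intro α hα h1
    have hαP : α ∈ P := hΔ2P ⟨hα, h1⟩
    have hw : w0 α ∈ Δ \ P := by rw [← hw0P]; exact ⟨α, hαP, rfl⟩
    rcases hc _ hw.1 with h | h | h
    · exact h
    · exfalso
      have hm : w0 α ∈ ⇑w0 '' {α ∈ Δ | c α = 0} := by rw [hw0Δ0]; exact ⟨hw.1, h⟩
      obtain ⟨β, hβ, heq⟩ := hm
      have hba : β = α := hinj heq
      rw [hba] at hβ
      rw [hβ.2] at h1; norm_num at h1
    · exact absurd (hΔ2P ⟨hw.1, h⟩) hw.2
  have hB : ∀ α, α ∈ Δ → c α = -1 → c (w0 α) = 1 := by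
    intro α hα hm
    have h1 : c (-α) = 1 := by rw [map_neg, hm]; norm_num
    have := hA (-α) (hΔneg α hα) h1
    rw [map_neg, map_neg] at this; linarith
  -- w0 '' Δ₂ = Δ₋₂
  have hw0Δ2 : ⇑w0 '' {α ∈ Δ | c α = 1} = {α ∈ Δ | c α = -1} := by
    ext β; constructor
    · rintro ⟨α, ⟨hα, h1⟩, rfl⟩
      exact ⟨hΔmem α hα, hA α hα h1⟩
    · rintro ⟨hβ, hm⟩
      have : β ∈ ⇑w0 '' Δ := by rw [hw0Δ]; exact hβ
      obtain ⟨α, hα, rfl⟩ := this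
      rcases hc α hα with h | h | h
      · rw [hB α hα h] at hm; norm_num at hm
      · rw [(h0mem α hα h).2] at hm; norm_num at hm
      · exact ⟨α, ⟨hα, h⟩, rfl⟩
  -- w0 '' Δ₋₂ = Δ₂
  have hw0Δm2 : ⇑w0 '' {α ∈ Δ | c α = -1} = {α ∈ Δ | c α = 1} := by
    ext β; constructor
    · rintro ⟨α, ⟨hα, h1⟩, rfl⟩
      exact ⟨hΔmem α hα, hB α hα h1⟩
    · rintro ⟨hβ, hm⟩
      have : β ∈ ⇑w0 '' Δ := by rw [hw0Δ]; exact hβ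
      obtain ⟨α, hα, rfl⟩ := this
      rcases hc α hα with h | h | h
      · exact ⟨α, ⟨hα, h⟩, rfl⟩
      · rw [(h0mem α hα h).2] at hm; norm_num at hm
      · rw [hA α hα h] at hm; norm_num at hm
  -- conj 1 : w0 '' Δ₀⁺ = Δ₀⁻
  have hc1 : ⇑w0 '' {α ∈ Δ | c α = 0 ∧ α ∈ P} = {α ∈ Δ | c α = 0 ∧ α ∉ P} := by
    ext β; constructor
    · rintro ⟨α, ⟨hα, h0, hαP⟩, rfl⟩
      have hw : w0 α ∈ Δ \ P := by rw [← hw0P]; exact ⟨α, hαP, rfl⟩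
      exact ⟨hw.1, (h0mem α hα h0).2, hw.2⟩
    · rintro ⟨hβ, h0, hβP⟩
      have : β ∈ ⇑w0 '' {α ∈ Δ | c α = 0} := by rw [hw0Δ0]; exact ⟨hβ, h0⟩
      obtain ⟨α, ⟨hα, hα0⟩, rfl⟩ := this
      refine ⟨α, ⟨hα, hα0, ?_⟩, rfl⟩
      by_contra hαP
      have hnP : -α ∈ P := by
        by_contra hn; exact hαP ((hPpart α hα).2 hn)
      have hw : w0 (-α) ∈ Δ \ P := by rw [← hw0P]; exact ⟨-α, hnP, rfl⟩
      rw [map_neg] at hw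
      exact hβP ((hPpart _ hβ).2 hw.2)
  -- w0 '' Δ₀⁻ = Δ₀⁺
  have hc1' : ⇑w0 '' {α ∈ Δ | c α = 0 ∧ α ∉ P} = {α ∈ Δ | c α = 0 ∧ α ∈ P} := by
    ext β; constructor
    · rintro ⟨α, ⟨hα, h0, hαP⟩, rfl⟩
      have hnP : -α ∈ P := by
        by_contra hn; exact hαP ((hPpart α hα).2 hn)
      have hw : w0 (-α) ∈ Δ \ P := by rw [← hw0P]; exact ⟨-α, hnP, rfl⟩
      rw [map_neg] at hw
      exact ⟨(h0mem α hα h0).1, (h0mem α hα h0).2,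
        (hPpart _ (h0mem α hα h0).1).2 hw.2⟩
    · rintro ⟨hβ, h0, hβP⟩
      have : β ∈ ⇑w0 '' {α ∈ Δ | c α = 0} := by rw [hw0Δ0]; exact ⟨hβ, h0⟩
      obtain ⟨α, ⟨hα, hα0⟩, rfl⟩ := this
      refine ⟨α, ⟨hα, hα0, ?_⟩, rfl⟩
      intro hαP
      have hw : w0 α ∈ Δ \ P := by rw [← hw0P]; exact ⟨α, hαP, rfl⟩
      exact hw.2 hβP
  -- wl preserves Δ₂ and Δ₋₂
  have hwlmem : ∀ α ∈ Δ, wl α ∈ Δ := by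
    intro α hα; rw [← hwlΔ]; exact ⟨α, hα, rfl⟩
  have hwl2 : ∀ r : ℝ, ⇑wl '' {α ∈ Δ | c α = r} = {α ∈ Δ | c α = r} := by
    intro r; ext β; constructor
    · rintro ⟨α, ⟨hα, h1⟩, rfl⟩
      exact ⟨hwlmem α hα, by rw [hwlc]; exact h1⟩
    · rintro ⟨hβ, hm⟩
      have : β ∈ ⇑wl '' Δ := by rw [hwlΔ]; exact hβ
      obtain ⟨α, hα, rfl⟩ := this
      exact ⟨α, ⟨hα, by rw [← hwlc]; exact hm⟩, rfl⟩
  have hcomp : ⇑(wl.trans w0) = ⇑w0 ∘ ⇑wl := rfl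
  -- conj 3
  have hY0 : ⇑(wl.trans w0) '' {α ∈ Δ | c α = 0 ∧ α ∈ P} = {α ∈ Δ | c α = 0 ∧ α ∈ P} := by
    rw [hcomp, Set.image_comp, hwl0, hc1']
  -- conj 4
  have hY2 : ⇑(wl.trans w0) '' {α ∈ Δ | c α = 1} = {α ∈ Δ | c α = -1} := by
    rw [hcomp, Set.image_comp, hwl2 1, hw0Δ2]
  have hYm2 : ⇑(wl.trans w0) '' {α ∈ Δ | c α = -1} = {α ∈ Δ | c α = 1} := by
    rw [hcomp, Set.image_comp, hwl2 (-1), hw0Δm2]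
  -- P decomposition
  have hPeq : P = {α ∈ Δ | c α = 0 ∧ α ∈ P} ∪ {α ∈ Δ | c α = 1} := by
    ext α; constructor
    · intro hαP
      rcases hP2 α hαP with h | h
      · exact Or.inl ⟨hPΔ hαP, h, hαP⟩
      · exact Or.inr ⟨hPΔ hαP, h⟩
    · rintro (⟨_, _, h⟩ | h)
      · exact h
      · exact hΔ2P h
  -- w_Y² = id
  have hWY : isW (wl.trans w0) := hWcomp w0 wl hw0W hwlW
  have hWYY : isW ((wl.trans w0).trans (wl.trans w0)) := hWcomp _ _ hWY hWY
  have hYP : ⇑((wl.trans w0).trans (wl.trans w0)) '' P = P := by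
    have h2 : ⇑((wl.trans w0).trans (wl.trans w0))
        = ⇑(wl.trans w0) ∘ ⇑(wl.trans w0) := rfl
    rw [h2, Set.image_comp]
    rw [hPeq, Set.image_union, Set.image_union, hY0, hY2, hY0, hYm2]
  have hsq := hid _ hWYY hYP
  refine ⟨hc1, hw0Δ2, hY0, hY2, fun x => ?_⟩
  have := hsq x
  simpa using this
end

section
/- In the root system E₆ (Bourbaki realization), with ε = ψ₁ = (1/2)(ε₈-ε₆-ε₇+ε₁-ε₂-ε₃-ε₄-ε₅), ε* = (2/3)(ε₈-ε₇-ε₆), γ₁ = -ε and γ₂ = -(1/2)(ε₈-ε₆-ε₇-ε₁+ε₂+ε₃+ε₄-ε₅), the set Γ = {γ₁, γ₂} is a maximal strongly orthogonal set in Δ₋₂, and no nonnegative integer combination a₁γ₁ + a₂γ₂ with (a₁,a₂) ≠ (0,0) is a multiple of ε*. -/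
open scoped RealInnerProductSpace

set_option maxHeartbeats 1000000 in
/-- Type `E₆` (Bourbaki realization, case E III): with `ε = ψ₁`,
`ε* = (2/3)(ε₈ - ε₇ - ε₆)`, `γ₁ = -ε` and `γ₂ = -(1/2)(ε₈-ε₆-ε₇-ε₁+ε₂+ε₃+ε₄-ε₅)`,
the set `Γ = {γ₁, γ₂}` is a maximal (strongly) orthogonal set in `Δ₋₂`, and no nonzero
nonnegative integer combination `a₁γ₁ + a₂γ₂` is a multiple of `ε*`.
(Coordinates are 0-indexed: `εᵢ = e (i-1)`.) -/
theorem stmt14 :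
    let e : Fin 8 → EuclideanSpace ℝ (Fin 8) := fun i => EuclideanSpace.single i 1
    let emb : Fin 5 → Fin 8 := fun j => ⟨j.val, by have := j.isLt; omega⟩
    let Δ2 : Set (EuclideanSpace ℝ (Fin 8)) :=
      {v | ∃ s : Fin 5 → Bool,
        (Finset.univ.filter (fun j => s j = true)).card % 2 = 0 ∧
        v = (1 / 2 : ℝ) • (e 7 - e 6 - e 5 +
          ∑ j : Fin 5, (if s j then (-1 : ℝ) else 1) • e (emb j))}
    let Δm2 : Set (EuclideanSpace ℝ (Fin 8)) := {v | -v ∈ Δ2}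
    let γ1 : EuclideanSpace ℝ (Fin 8) :=
      -((1 / 2 : ℝ) • (e 7 - e 5 - e 6 + e 0 - e 1 - e 2 - e 3 - e 4))
    let γ2 : EuclideanSpace ℝ (Fin 8) :=
      -((1 / 2 : ℝ) • (e 7 - e 5 - e 6 - e 0 + e 1 + e 2 + e 3 - e 4))
    let εstar : EuclideanSpace ℝ (Fin 8) := (2 / 3 : ℝ) • (e 7 - e 6 - e 5)
    (γ1 ∈ Δm2 ∧ γ2 ∈ Δm2) ∧
    ⟪γ1, γ2⟫ = (0 : ℝ) ∧
    (∀ β ∈ Δm2, β ≠ γ1 → β ≠ γ2 → (⟪β, γ1⟫ ≠ (0 : ℝ) ∨ ⟪β, γ2⟫ ≠ (0 : ℝ))) ∧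
    (∀ a1 a2 : ℕ, ¬(a1 = 0 ∧ a2 = 0) → ∀ m : ℝ,
      (a1 : ℝ) • γ1 + (a2 : ℝ) • γ2 ≠ m • εstar) := by
  intro e emb Δ2 Δm2 γ1 γ2 εstar
  have hemb0 : emb 0 = 0 := rfl
  have hemb1 : emb 1 = 1 := rfl
  have hemb2 : emb 2 = 2 := rfl
  have hemb3 : emb 3 = 3 := rfl
  have hemb4 : emb 4 = 4 := rfl
  refine ⟨⟨?_, ?_⟩, ?_, ?_, ?_⟩
  · refine ⟨![false, true, true, true, true], by decide, ?_⟩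
    simp only [γ1, e, neg_neg, Fin.sum_univ_five, hemb0, hemb1, hemb2, hemb3, hemb4]
    ext i
    fin_cases i <;>
      simp [EuclideanSpace.single_apply, PiLp.add_apply, PiLp.sub_apply,
        PiLp.smul_apply, smul_eq_mul]
  · refine ⟨![true, false, false, false, true], by decide, ?_⟩
    simp only [γ2, e, neg_neg, Fin.sum_univ_five, hemb0, hemb1, hemb2, hemb3, hemb4]
    ext i
    fin_cases i <;>
      simp [EuclideanSpace.single_apply, PiLp.add_apply, PiLp.sub_apply,
        PiLp.smul_apply, smul_eq_mul]
  · simp only [γ1, γ2, e]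
    simp [PiLp.inner_apply, RCLike.inner_apply, Fin.sum_univ_eight,
      EuclideanSpace.single_apply, PiLp.add_apply, PiLp.sub_apply,
      PiLp.smul_apply, PiLp.neg_apply, smul_eq_mul]
  · intro β hβ _ _
    obtain ⟨s, _, hb⟩ := hβ
    rw [Fin.sum_univ_five] at hb
    set t0 : ℝ := (if s 0 then (-1 : ℝ) else 1) with ht0
    set t1 : ℝ := (if s 1 then (-1 : ℝ) else 1) with ht1
    set t2 : ℝ := (if s 2 then (-1 : ℝ) else 1) with ht2
    set t3 : ℝ := (if s 3 then (-1 : ℝ) else 1) with ht3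
    set t4 : ℝ := (if s 4 then (-1 : ℝ) else 1) with ht4
    have hd4 : t4 = -1 ∨ t4 = 1 := by cases h : s 4 <;> simp [ht4, h]
    have hβeq : β = -((1 / 2 : ℝ) • (e 7 - e 6 - e 5 +
        (t0 • e (emb 0) + t1 • e (emb 1) + t2 • e (emb 2) + t3 • e (emb 3) +
          t4 • e (emb 4)))) := by rw [← hb, neg_neg]
    by_contra hc
    push_neg at hc
    obtain ⟨h1, h2⟩ := hc
    rw [hβeq] at h1 h2
    simp only [γ1, γ2, e, hemb0, hemb1, hemb2, hemb3, hemb4] at h1 h2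
    simp [PiLp.inner_apply, RCLike.inner_apply, Fin.sum_univ_eight,
      EuclideanSpace.single_apply, PiLp.add_apply, PiLp.sub_apply,
      PiLp.smul_apply, PiLp.neg_apply, smul_eq_mul] at h1 h2
    rcases hd4 with h | h <;> rw [h] at h1 h2 <;> linarith
  · intro a1 a2 ha m h
    have h4 : ((a1 : ℝ) • γ1 + (a2 : ℝ) • γ2) (4 : Fin 8) = (m • εstar) (4 : Fin 8) := by
      rw [h]
    simp only [γ1, γ2, εstar, e] at h4
    simp [EuclideanSpace.single_apply, PiLp.add_apply, PiLp.sub_apply,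
      PiLp.smul_apply, PiLp.neg_apply, smul_eq_mul] at h4
    have ha1 : (0:ℝ) ≤ (a1 : ℝ) := Nat.cast_nonneg _
    have ha2 : (0:ℝ) ≤ (a2 : ℝ) := Nat.cast_nonneg _
    have e1 : (a1 : ℝ) = 0 := by linarith
    have e2 : (a2 : ℝ) = 0 := by linarith
    exact ha ⟨Nat.cast_eq_zero.mp e1, Nat.cast_eq_zero.mp e2⟩
end
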